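/- If x ∈ ℝ^m is an s-rectifiable random vector, then there exists a set U ⊆ ℝ^m with P[x ∈ U] = 1 and upper modified Minkowski dimension of U at most s. -/

import Mathlib

open MeasureTheory Filter Set Metric Bornology Matrix Pointwise
noncomputable def coveringNumber {E : Type*} [PseudoMetricSpace E] (U : Set E) (ρ : ℝ) : ℕ :=
  sInf {k : ℕ | ∃ t : Finset E, t.card = k ∧ U ⊆ ⋃ x ∈ t, Metric.ball x ρ}

noncomputable def lowerMinkDim {E : Type*} [PseudoMetricSpace E] (U : Set E) : ℝ :=
  liminf (fun ρ : ℝ => Real.log (coveringNumber U ρ) / Real.log (1 / ρ)) (nhdsWithin 0 (Set.Ioi 0))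

noncomputable def upperMinkDim {E : Type*} [PseudoMetricSpace E] (U : Set E) : ℝ :=
  limsup (fun ρ : ℝ => Real.log (coveringNumber U ρ) / Real.log (1 / ρ)) (nhdsWithin 0 (Set.Ioi 0))

def IsDimCover {E : Type*} [PseudoMetricSpace E] [MeasurableSpace E] (U : Set E) (V : ℕ → Set E) : Prop :=
  (∀ i, (V i).Nonempty ∧ IsBounded (V i) ∧ MeasurableSet (V i)) ∧ U ⊆ ⋃ i, V i

noncomputable def lowerModMinkDim {E : Type*} [PseudoMetricSpace E] [MeasurableSpace E] (U : Set E) : ℝ :=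
  sInf {d : ℝ | ∃ V : ℕ → Set E, IsDimCover U V ∧ d = ⨆ i, lowerMinkDim (V i)}

noncomputable def upperModMinkDim {E : Type*} [PseudoMetricSpace E] [MeasurableSpace E] (U : Set E) : ℝ :=
  sInf {d : ℝ | ∃ V : ℕ → Set E, IsDimCover U V ∧ d = ⨆ i, upperMinkDim (V i)}
def IsRectifiableSet (s m : ℕ) (U : Set (EuclideanSpace ℝ (Fin m))) : Prop :=
  MeasurableSet U ∧
  ∃ (A : ℕ → Set (EuclideanSpace ℝ (Fin s)))
    (φ : ℕ → EuclideanSpace ℝ (Fin s) → EuclideanSpace ℝ (Fin m)),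
    (∀ i, (A i).Nonempty ∧ IsBounded (A i) ∧ MeasurableSet (A i) ∧
      ∃ K : NNReal, LipschitzOnWith K (φ i) (A i)) ∧
    μH[(s : ℝ)] (U \ ⋃ i, φ i '' A i) = 0

def IsRectifiableRV (s m : ℕ) {Ω : Type*} [MeasureSpace Ω] (x : Ω → EuclideanSpace ℝ (Fin m)) : Prop :=
  Measurable x ∧ ∃ U : Set (EuclideanSpace ℝ (Fin m)), IsRectifiableSet s m U ∧
    volume (x ⁻¹' U) = 1 ∧ Measure.map x volume ≪ μH[(s : ℝ)]

/-!
The law of `x` does not charge the `H^s`-null part of its rectifiable support, so `x` lies almost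
surely in the union of the Lipschitz images `φ i '' A i`. Their closures (closed, hence Borel) form
an admissible countable cover, and each has upper box dimension at most `s`: a bounded subset of
`ℝ^s` is covered by `O(ρ^(-s))` balls of radius `ρ` (a maximal `ρ/2`-separated subset, counted by
comparing volumes), a `K`-Lipschitz map turns a cover by `ρ/(2K+1)`-balls into one by `ρ`-balls,
and passing to the closure only doubles the radius.
-/

open Module
open scoped Topology NNReal ENNReal

lemma coveringNumber_le_card {E : Type*} [PseudoMetricSpace E] {U : Set E} {ρ : ℝ}
    {t : Finset E} (h : U ⊆ ⋃ x ∈ t, ball x ρ) : coveringNumber U ρ ≤ t.card :=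
  Nat.sInf_le ⟨t, rfl, h⟩

def HasPolyCovers {E : Type*} [PseudoMetricSpace E] (d : ℝ) (S : Set E) : Prop :=
  ∃ C : ℝ, 1 ≤ C ∧ ∀ ρ : ℝ, 0 < ρ → ρ ≤ 1 →
    ∃ t : Finset E, (t.card : ℝ) ≤ (C / ρ) ^ d ∧ S ⊆ ⋃ c ∈ t, ball c ρ

section MinkowskiDimension

variable {E : Type*} [PseudoMetricSpace E]

lemma eventually_log_coveringNumber_div_nonneg (U : Set E) :
    ∀ᶠ ρ : ℝ in 𝓝[>] 0, 0 ≤ Real.log (coveringNumber U ρ) / Real.log (1 / ρ) := by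
  filter_upwards [Ioo_mem_nhdsGT (zero_lt_one (α := ℝ))] with ρ hρ
  exact div_nonneg (Real.log_natCast_nonneg _)
    (Real.log_nonneg ((le_div_iff₀ hρ.1).2 (by linarith [hρ.2])))

lemma upperMinkDim_nonneg (U : Set E) : 0 ≤ upperMinkDim U := by
  refine Real.sInf_nonneg fun a (ha : ∀ᶠ ρ in 𝓝[>] 0, _ ≤ a) => ?_
  obtain ⟨ρ, hρa, hρ⟩ := (ha.and (eventually_log_coveringNumber_div_nonneg U)).exists
  exact hρ.trans hρa

lemma tendsto_const_add_div_log_one_div (d B : ℝ) :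
    Tendsto (fun ρ : ℝ => d + B / Real.log (1 / ρ)) (𝓝[>] 0) (𝓝 d) := by
  have hlog : Tendsto (fun ρ : ℝ => Real.log (1 / ρ)) (𝓝[>] 0) atTop := by
    simp only [one_div]
    exact Real.tendsto_log_atTop.comp tendsto_inv_nhdsGT_zero
  simpa using tendsto_const_nhds.add (tendsto_const_nhds.div_atTop hlog)

lemma HasPolyCovers.upperMinkDim_le {d : ℝ} {S : Set E} (h : HasPolyCovers d S) (hd : 0 ≤ d) :
    upperMinkDim S ≤ d := by
  obtain ⟨C, hC, hcov⟩ := h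
  have hbound : ∀ᶠ ρ : ℝ in 𝓝[>] 0, Real.log (coveringNumber S ρ) / Real.log (1 / ρ) ≤
      d + d * Real.log C / Real.log (1 / ρ) := by
    filter_upwards [Ioo_mem_nhdsGT (zero_lt_one (α := ℝ))] with ρ ⟨hρ0, hρ1⟩
    obtain ⟨t, htcard, htS⟩ := hcov ρ hρ0 hρ1.le
    have hL : 0 < Real.log (1 / ρ) :=
      Real.log_pos (by rw [one_div]; exact (one_lt_inv₀ hρ0).2 hρ1)
    have hCρ : 1 ≤ C / ρ := (le_div_iff₀ hρ0).2 (by linarith)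
    have hN : Real.log (coveringNumber S ρ) ≤ d * Real.log (C / ρ) := by
      rcases Nat.eq_zero_or_pos (coveringNumber S ρ) with h0 | h0
      · simpa [h0] using mul_nonneg hd (Real.log_nonneg hCρ)
      · rw [← Real.log_rpow (by positivity)]
        exact Real.log_le_log (by exact_mod_cast h0)
          ((Nat.cast_le.2 (coveringNumber_le_card htS)).trans htcard)
    rw [div_le_iff₀ hL, add_mul, div_mul_cancel₀ _ hL.ne']
    calc Real.log (coveringNumber S ρ) ≤ d * Real.log (C / ρ) := hN
      _ = d * Real.log (1 / ρ) + d * Real.log C := by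
        rw [div_eq_mul_one_div C, Real.log_mul (by positivity) (by positivity)]; ring
  have hlim := tendsto_const_add_div_log_one_div d (d * Real.log C)
  calc upperMinkDim S
      ≤ limsup (fun ρ : ℝ => d + d * Real.log C / Real.log (1 / ρ)) (𝓝[>] 0) :=
        limsup_le_limsup hbound
          (isCoboundedUnder_le_of_eventually_le _ (eventually_log_coveringNumber_div_nonneg S))
          hlim.isBoundedUnder_le
    _ = d := hlim.limsup_eq

end MinkowskiDimension

lemma IsDimCover.upperModMinkDim_le {E : Type*} [PseudoMetricSpace E] [MeasurableSpace E]
    {U : Set E} {V : ℕ → Set E} {d : ℝ} (hV : IsDimCover U V)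
    (hd : ∀ i, upperMinkDim (V i) ≤ d) : upperModMinkDim U ≤ d := by
  have hbdd : BddBelow {e | ∃ W, IsDimCover U W ∧ e = ⨆ i, upperMinkDim (W i)} := by
    refine ⟨0, ?_⟩
    rintro _ ⟨W, -, rfl⟩
    exact Real.iSup_nonneg fun i => upperMinkDim_nonneg (W i)
  exact (csInf_le hbdd ⟨V, hV, rfl⟩).trans (ciSup_le hd)

section PolyCovers

variable {E F : Type*} [PseudoMetricSpace E] [PseudoMetricSpace F] {d : ℝ} {S : Set E}

lemma HasPolyCovers.isBounded (h : HasPolyCovers d S) : IsBounded S := by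
  obtain ⟨C, -, hcov⟩ := h
  obtain ⟨t, -, htS⟩ := hcov 1 one_pos le_rfl
  exact ((isBounded_biUnion_finset t).2 fun c _ => isBounded_ball).subset htS

lemma HasPolyCovers.closure (h : HasPolyCovers d S) : HasPolyCovers d (closure S) := by
  obtain ⟨C, hC, hcov⟩ := h
  refine ⟨2 * C, by linarith, fun ρ hρ0 hρ1 => ?_⟩
  obtain ⟨t, htcard, htS⟩ := hcov (ρ / 2) (by positivity) (by linarith)
  refine ⟨t, by rwa [div_div_eq_mul_div, mul_comm] at htcard, ?_⟩
  calc _root_.closure S ⊆ _root_.closure (⋃ c ∈ t, ball c (ρ / 2)) := closure_mono htS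
    _ = ⋃ c ∈ t, _root_.closure (ball c (ρ / 2)) := t.closure_biUnion _
    _ ⊆ ⋃ c ∈ t, ball c ρ := iUnion₂_mono fun c _ =>
      closure_ball_subset_closedBall.trans (closedBall_subset_ball (by linarith))

lemma HasPolyCovers.image {f : E → F} {K : ℝ≥0} (h : HasPolyCovers d S)
    (hf : LipschitzOnWith K f S) : HasPolyCovers d (f '' S) := by
  classical
  obtain ⟨C, hC, hcov⟩ := h
  have hK : (0 : ℝ) < 2 * K + 1 := by positivity
  refine ⟨(2 * K + 1) * C, one_le_mul_of_one_le_of_one_le (by simp) hC, fun ρ hρ0 hρ1 => ?_⟩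
  set r := ρ / (2 * K + 1)
  have hr : r ≤ ρ := div_le_self hρ0.le (by simp)
  obtain ⟨t, htcard, htS⟩ := hcov r (by positivity) (hr.trans hρ1)
  let g : E → F := fun c => if hc : (ball c r ∩ S).Nonempty then f hc.choose else f c
  refine ⟨t.image g, ?_, ?_⟩
  · calc ((t.image g).card : ℝ) ≤ t.card := by exact_mod_cast Finset.card_image_le
      _ ≤ (C / r) ^ d := htcard
      _ = ((2 * K + 1) * C / ρ) ^ d := by simp only [r]; congr 1; field_simp
  · rintro _ ⟨q, hqS, rfl⟩
    obtain ⟨c, hct, hqc⟩ := mem_iUnion₂.1 (htS hqS)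
    have hc : (ball c r ∩ S).Nonempty := ⟨q, hqc, hqS⟩
    obtain ⟨hpc, hpS⟩ := hc.choose_spec
    refine mem_biUnion (Finset.mem_image_of_mem g hct) ?_
    rw [mem_ball, show g c = f hc.choose from dif_pos hc]
    calc dist (f q) (f hc.choose) ≤ K * dist q hc.choose := hf.dist_le_mul q hqS _ hpS
      _ ≤ K * (2 * r) := by
        gcongr
        linarith [dist_triangle_right q hc.choose c, mem_ball.1 hqc, mem_ball.1 hpc]
      _ < ρ := by
        rw [← mul_assoc, mul_div_assoc', div_lt_iff₀ hK]
        nlinarith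

end PolyCovers

section FiniteDimensional

variable {E : Type*} [NormedAddCommGroup E] [NormedSpace ℝ E] [FiniteDimensional ℝ E]

lemma Finset.card_le_of_isSeparated {t : Finset E} {ε : ℝ≥0} {R : ℝ} (hR : 0 ≤ R)
    (hε : 0 < ε) (htR : (t : Set E) ⊆ closedBall 0 R)
    (ht : IsSeparated (ε : ℝ≥0∞) (t : Set E)) :
    (t.card : ℝ) ≤ ((2 * R + ε) / ε) ^ finrank ℝ E := by
  borelize E
  let μ : Measure E := Measure.addHaar
  have hε2 : (0 : ℝ) < ε / 2 := by positivity
  have hdisj : (t : Set E).PairwiseDisjoint fun c => ball c (ε / 2) := by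
    intro c hc c' hc' hne
    refine ball_disjoint_ball ?_
    have hsep : (ε : ℝ≥0∞) < edist c c' := ht hc hc' hne
    rw [edist_nndist, ENNReal.coe_lt_coe, ← NNReal.coe_lt_coe, coe_nndist] at hsep
    linarith
  have hsub : (⋃ c ∈ t, ball c (ε / 2)) ⊆ ball (0 : E) (R + ε / 2) :=
    iUnion₂_subset fun c hc => ball_subset_ball' (by linarith [mem_closedBall.1 (htR hc)])
  have hvol :=
    calc (t.card : ℝ≥0∞) * ENNReal.ofReal ((ε / 2 : ℝ) ^ finrank ℝ E) * μ (ball 0 1)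
        = μ (⋃ c ∈ t, ball c (ε / 2)) := by
          rw [measure_biUnion_finset hdisj fun c _ => measurableSet_ball]
          simp [μ.addHaar_ball_of_pos _ hε2, mul_assoc]
      _ ≤ μ (ball 0 (R + ε / 2)) := measure_mono hsub
      _ = ENNReal.ofReal ((R + ε / 2) ^ finrank ℝ E) * μ (ball 0 1) :=
          μ.addHaar_ball_of_pos _ (by positivity)
  have hball : μ (ball 0 1) ≠ 0 := (measure_ball_pos μ 0 one_pos).ne'
  have hcard := ENNReal.toReal_le_of_le_ofReal (by positivity)
    ((ENNReal.mul_le_mul_iff_left hball measure_ball_lt_top.ne).1 hvol)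
  rw [ENNReal.toReal_mul, ENNReal.toReal_ofReal (by positivity), ENNReal.toReal_natCast,
    ← le_div_iff₀ (by positivity), ← div_pow] at hcard
  rwa [show (R + ε / 2) / (ε / 2) = (2 * R + ε) / ε by field_simp] at hcard

lemma Bornology.IsBounded.packingNumber_ne_top {S : Set E} (hS : IsBounded S) {ε : ℝ≥0}
    (hε : 0 < ε) : packingNumber ε S ≠ ⊤ := by
  obtain ⟨R, hR, hSR⟩ := hS.subset_closedBall_lt 0 0
  set N := ⌊((2 * R + ε) / ε) ^ finrank ℝ E⌋₊
  refine ne_top_of_le_ne_top (ENat.natCast_ne_top N) (iSup₂_le fun C hCS => iSup_le fun hC => ?_)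
  by_contra! hNC
  obtain ⟨T, hTC, hTcard⟩ := exists_subset_encard_eq (Order.add_one_le_of_lt hNC)
  have hT : T.Finite := finite_of_encard_eq_coe hTcard
  have hcard := hT.toFinset.card_le_of_isSeparated hR.le hε
    (by simpa using (hTC.trans hCS).trans hSR) (by simpa using hC.subset hTC)
  rw [hT.encard_eq_coe_toFinset_card, ← ENat.natCast_one, ← ENat.natCast_add,
    ENat.natCast_inj] at hTcard
  rw [hTcard, Nat.cast_add_one] at hcard
  exact (Nat.lt_floor_add_one _).not_ge hcard

lemma Bornology.IsBounded.hasPolyCovers {S : Set E} (hS : IsBounded S) :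
    HasPolyCovers (finrank ℝ E) S := by
  obtain ⟨R, hR, hSR⟩ := hS.subset_closedBall_lt 0 0
  refine ⟨4 * R + 1, by linarith, fun ρ hρ0 hρ1 => ?_⟩
  set ε : ℝ≥0 := ⟨ρ / 2, by positivity⟩
  have hε : 0 < ε := by change (0 : ℝ) < ρ / 2; positivity
  set M := maximalSeparatedSet ε S
  have hpack := hS.packingNumber_ne_top hε
  have hM : M.Finite := encard_ne_top_iff.1 (encard_maximalSeparatedSet hpack ▸ hpack)
  refine ⟨hM.toFinset, ?_, fun a ha => ?_⟩
  · have hcard := hM.toFinset.card_le_of_isSeparated hR.le hε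
      (by simpa using maximalSeparatedSet_subset.trans hSR)
      (by simpa using isSeparated_maximalSeparatedSet)
    rw [Real.rpow_natCast]
    refine hcard.trans (pow_le_pow_left₀ (by positivity) ?_ _)
    change (2 * R + ρ / 2) / (ρ / 2) ≤ (4 * R + 1) / ρ
    rw [div_le_div_iff₀ (by positivity) hρ0]
    nlinarith
  · obtain ⟨c, hcM, hac⟩ := isCover_maximalSeparatedSet hpack ha
    refine mem_biUnion (hM.mem_toFinset.2 hcM) (mem_ball.2 ?_)
    replace hac : edist a c ≤ ε := hac
    rw [edist_nndist, ENNReal.coe_le_coe, ← NNReal.coe_le_coe, coe_nndist] at hac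
    change dist a c ≤ ρ / 2 at hac
    linarith

end FiniteDimensional

lemma upperModMinkDim_iUnion_image_le {E F : Type*} [NormedAddCommGroup E] [NormedSpace ℝ E]
    [FiniteDimensional ℝ E] [PseudoMetricSpace F] [MeasurableSpace F] [OpensMeasurableSpace F]
    {A : ℕ → Set E} {φ : ℕ → E → F}
    (hA : ∀ i, (A i).Nonempty ∧ IsBounded (A i) ∧ ∃ K, LipschitzOnWith K (φ i) (A i)) :
    upperModMinkDim (⋃ i, φ i '' A i) ≤ finrank ℝ E := by
  have hcov i : HasPolyCovers (finrank ℝ E) (closure (φ i '' A i)) := by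
    obtain ⟨-, hb, K, hK⟩ := hA i
    exact (hb.hasPolyCovers.image hK).closure
  have hV : IsDimCover (⋃ i, φ i '' A i) fun i => closure (φ i '' A i) :=
    ⟨fun i => ⟨((hA i).1.image _).closure, (hcov i).isBounded,
      isClosed_closure.measurableSet⟩, iUnion_mono fun i => subset_closure⟩
  exact hV.upperModMinkDim_le fun i => (hcov i).upperMinkDim_le (Nat.cast_nonneg _)

theorem exists_full_measure_set_of_rectifiableRV {s m : ℕ} {Ω : Type*} [MeasureSpace Ω]
    [IsProbabilityMeasure (volume : Measure Ω)]
    (x : Ω → EuclideanSpace ℝ (Fin m)) (h : IsRectifiableRV s m x) :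
    ∃ U : Set (EuclideanSpace ℝ (Fin m)), volume (x ⁻¹' U) = 1 ∧ upperModMinkDim U ≤ s := by
  obtain ⟨hx, U₀, ⟨-, A, φ, hAφ, hnull⟩, hU₀, hac⟩ := h
  refine ⟨⋃ i, φ i '' A i, le_antisymm prob_le_one ?_, ?_⟩
  · have hae : x ⁻¹' U₀ ≤ᵐ[volume] x ⁻¹' ⋃ i, φ i '' A i :=
      ae_of_ae_map (p := fun y => y ∈ U₀ → y ∈ ⋃ i, φ i '' A i) hx.aemeasurable
        (ae_iff.2 (hac (measure_mono_null (fun _ => Classical.not_imp.1) hnull)))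
    exact hU₀ ▸ measure_mono_ae hae
  · simpa only [finrank_euclideanSpace_fin] using upperModMinkDim_iUnion_image_le fun i =>
      ⟨(hAφ i).1, (hAφ i).2.1, (hAφ i).2.2.2⟩
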